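/- arXiv:1903.09473 — 4 statements merged into one kernel-verified Lean document; each statement's English description precedes it below -/
import Mathlib

section
/- Let ℋ be a Hilbert space, let e⁻ ≠ e⁺ in ℋ, and let 𝒲 : ℋ → [0,+∞] be defined by 𝒲(v) = 0 if v ∈ {e⁻, e⁺} and 𝒲(v) = 1 otherwise (the characteristic function of ℋ∖{e⁻,e⁺}). Then the map U₀ defined by U₀(t) = e⁻ for t ≤ 0, U₀(t) = e⁻ + √2 t n for 0 ≤ t ≤ ℓ₀/√2, and U₀(t) = e⁺ for t ≥ ℓ₀/√2, belongs to 𝒜, is a minimizer of 𝒥_ℝ over 𝒜, and 𝒥_ℝ(U₀) = min_{V∈𝒜} 𝒥_ℝ(V) = √2 ℓ₀. -/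
open MeasureTheory Filter
open scoped ENNReal RealInnerProductSpace

/-- `V` belongs to `H¹_loc(ℝ; H)` with (locally square-integrable) derivative `V'`. -/
def IsH1loc {H : Type*} [NormedAddCommGroup H] [NormedSpace ℝ H]
    (V V' : ℝ → H) : Prop :=
  (∀ a b : ℝ, V b - V a = ∫ t in a..b, V' t) ∧
    MeasureTheory.LocallyIntegrable (fun t => ‖V' t‖ ^ 2) MeasureTheory.volume

/-- The action functional `𝒥_ℝ(V) = ∫_ℝ [½‖V'(t)‖² + 𝒲(V(t))] dt`. -/
noncomputable def actJ {H : Type*} [NormedAddCommGroup H]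
    (W : H → ℝ≥0∞) (V V' : ℝ → H) : ℝ≥0∞ :=
  ∫⁻ t, (ENNReal.ofReal (‖V' t‖ ^ 2 / 2) + W (V t))

/-- Membership in the constrained class `𝒜` (the geometric constraint). -/
def memA {H : Type*} [NormedAddCommGroup H] [InnerProductSpace ℝ H]
    (em ep : H) (V : ℝ → H) : Prop :=
  ∃ tm tp : ℝ, tm < tp ∧
    (∀ t ≤ tm, ⟪V t - em, (‖ep - em‖)⁻¹ • (ep - em)⟫ ≤ 3 * ‖ep - em‖ / 4) ∧
    (∀ t, tp ≤ t → ‖ep - em‖ / 4 ≤ ⟪V t - em, (‖ep - em‖)⁻¹ • (ep - em)⟫)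

/-- The characteristic function of `ℋ ∖ {e⁻, e⁺}` as a potential. -/
noncomputable def chiW {H : Type*} (em ep : H) (v : H) : ℝ≥0∞ :=
  Set.indicator ({em, ep}ᶜ) (fun _ => (1 : ℝ≥0∞)) v

/-- The explicit minimizer for the characteristic-function potential. -/
noncomputable def U₀ {H : Type*} [NormedAddCommGroup H] [InnerProductSpace ℝ H]
    (em ep : H) (t : ℝ) : H :=
  if t ≤ 0 then em
  else if t ≤ ‖ep - em‖ / Real.sqrt 2 then
    em + (Real.sqrt 2 * t) • ((‖ep - em‖)⁻¹ • (ep - em))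
  else ep

/-- Its derivative. -/
noncomputable def U₀' {H : Type*} [NormedAddCommGroup H] [InnerProductSpace ℝ H]
    (em ep : H) (t : ℝ) : H :=
  if 0 < t ∧ t < ‖ep - em‖ / Real.sqrt 2 then
    Real.sqrt 2 • ((‖ep - em‖)⁻¹ • (ep - em))
  else 0

open Metric Set in
/-- If an integrable `g : ℝ → H` has vanishing integral between any two points of a
measurable set `A`, then `g = 0` a.e. on `A`. -/
theorem ae_zero_on_level {H : Type*} [NormedAddCommGroup H] [NormedSpace ℝ H]
    [CompleteSpace H] {g : ℝ → H} (hg : Integrable g) {A : Set ℝ} (hA : MeasurableSet A)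
    (h0 : ∀ s ∈ A, ∀ u ∈ A, (∫ t in s..u, g t) = 0) :
    ∀ᵐ t, t ∈ A → g t = 0 := by
  have hleb : ∀ᵐ x, Tendsto (fun r => ⨍ y in closedBall x r, ‖g y - g x‖) (nhdsWithin 0 (Ioi 0)) (nhds 0) := by
    filter_upwards [(Besicovitch.vitaliFamily (volume : Measure ℝ)).ae_tendsto_average_norm_sub
      hg.locallyIntegrable] with x hx
    exact hx.comp (Besicovitch.tendsto_filterAt volume x)
  rw [← ae_restrict_iff' hA]
  filter_upwards [Besicovitch.ae_tendsto_measure_inter_div (volume : Measure ℝ) A,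
    ae_restrict_of_ae hleb, ae_restrict_mem hA] with t hd hl ht
  -- main estimate: ∀ ε > 0, ‖g t‖ ≤ 4 * ε
  have key : ∀ ε > (0:ℝ), ‖g t‖ ≤ 4 * ε := by
    intro ε hε
    have h34 : (ENNReal.ofReal (3/4) : ℝ≥0∞) < 1 := by
      rw [show (1:ℝ≥0∞) = ENNReal.ofReal 1 by simp]
      exact ENNReal.ofReal_lt_ofReal_iff_of_nonneg (by norm_num) |>.2 (by norm_num)
    have hev1 : ∀ᶠ r in nhdsWithin 0 (Ioi 0),
        ENNReal.ofReal (3/4) < volume (A ∩ closedBall t r) / volume (closedBall t r) :=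
      hd (Ioi_mem_nhds h34)
    have hev2 : ∀ᶠ r in nhdsWithin 0 (Ioi 0),
        (⨍ y in closedBall t r, ‖g y - g t‖) < ε := by
      have := hl (Iio_mem_nhds hε)
      exact this
    obtain ⟨r, h1, h2, (hr : 0 < r)⟩ := (hev1.and (hev2.and self_mem_nhdsWithin)).exists
    -- find s ∈ A ∩ Ioc (t + r/2) (t + r)
    obtain ⟨s, hsA, hs1, hs2⟩ : ∃ s ∈ A, t + r/2 < s ∧ s ≤ t + r := by
      by_contra hcon
      push_neg at hcon
      have hsub : A ∩ closedBall t r ⊆ Icc (t - r) (t + r/2) := by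
        rintro x ⟨hxA, hxB⟩
        rw [Real.closedBall_eq_Icc] at hxB
        refine ⟨hxB.1, ?_⟩
        by_contra hx
        push_neg at hx
        exact absurd (hcon x hxA hx) (not_lt.2 hxB.2)
      have hle : volume (A ∩ closedBall t r) / volume (closedBall t r)
          ≤ ENNReal.ofReal (3/4) := by
        have h1' : volume (A ∩ closedBall t r) ≤ ENNReal.ofReal (3/2 * r) := by
          refine le_trans (measure_mono hsub) ?_
          rw [Real.volume_Icc]
          apply ENNReal.ofReal_le_ofReal; linarith
        have h2' : volume (closedBall t r) = ENNReal.ofReal (2 * r) := by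
          rw [Real.volume_closedBall]
        rw [h2']
        refine le_trans (ENNReal.div_le_div_right h1' _) ?_
        rw [← ENNReal.ofReal_div_of_pos (by linarith)]
        apply ENNReal.ofReal_le_ofReal
        rw [div_le_iff₀ (by linarith)]; linarith
      exact absurd h1 (not_lt.2 hle)
    have hts : t < s := by linarith
    -- the integral identity
    have hint : (s - t) • g t = ∫ y in t..s, (g t - g y) := by
      rw [intervalIntegral.integral_sub intervalIntegrable_const hg.intervalIntegrable,
        intervalIntegral.integral_const, h0 t ht s hsA, sub_zero]
    have hIoc : Ioc t s ⊆ closedBall t r := by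
      rw [Real.closedBall_eq_Icc]
      exact fun x hx => ⟨by linarith [hx.1], by linarith [hx.2]⟩
    have hnorm : (s - t) * ‖g t‖ ≤ ∫ y in closedBall t r, ‖g t - g y‖ := by
      have e1 : ‖(s - t) • g t‖ = (s - t) * ‖g t‖ := by
        rw [norm_smul, Real.norm_of_nonneg (by linarith)]
      rw [← e1, hint]
      refine le_trans (intervalIntegral.norm_integral_le_integral_norm hts.le) ?_
      rw [intervalIntegral.integral_of_le hts.le]
      have hIOn : IntegrableOn (fun y => ‖g t - g y‖) (closedBall t r) volume := by
        refine (((integrableOn_const ?_).sub hg.integrableOn).norm)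
        rw [Real.volume_closedBall]; exact ENNReal.ofReal_ne_top
      refine setIntegral_mono_set hIOn
        (Eventually.of_forall fun x => norm_nonneg _) (HasSubset.Subset.eventuallyLE hIoc)
    have havg : ∫ y in closedBall t r, ‖g t - g y‖ ≤ 2 * r * ε := by
      have hv : (volume (closedBall t r)).toReal = 2 * r := by
        rw [Real.volume_closedBall, ENNReal.toReal_ofReal (by linarith)]
      have h2' : (⨍ y in closedBall t r, ‖g y - g t‖) = (2*r)⁻¹ * ∫ y in closedBall t r, ‖g y - g t‖ := by
        rw [setAverage_eq, measureReal_def, hv]; simp [smul_eq_mul]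
      have hflip : ∀ y, ‖g t - g y‖ = ‖g y - g t‖ := fun y => norm_sub_rev _ _
      simp_rw [hflip]
      rw [show (∫ y in closedBall t r, ‖g y - g t‖)
          = 2*r * ((2*r)⁻¹ * ∫ y in closedBall t r, ‖g y - g t‖) by field_simp, ← h2']
      nlinarith
    nlinarith [norm_nonneg (g t)]
  by_contra hne
  have hpos : 0 < ‖g t‖ := norm_pos_iff.mpr hne
  have := key (‖g t‖ / 8) (by positivity)
  linarith


section Aux
variable {H : Type*} [NormedAddCommGroup H] [InnerProductSpace ℝ H]

lemma sqrt2_pos : (0:ℝ) < Real.sqrt 2 := Real.sqrt_pos.2 two_pos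

lemma hl_pos (em ep : H) (hne : em ≠ ep) : 0 < ‖ep - em‖ :=
  norm_pos_iff.2 (sub_ne_zero_of_ne hne.symm)

lemma L_pos (em ep : H) (hne : em ≠ ep) : 0 < ‖ep - em‖ / Real.sqrt 2 :=
  div_pos (hl_pos em ep hne) sqrt2_pos

lemma nu_norm_one (em ep : H) (hne : em ≠ ep) : ‖(‖ep - em‖)⁻¹ • (ep - em)‖ = 1 := by
  have h := hl_pos em ep hne
  rw [norm_smul, Real.norm_eq_abs, abs_of_pos (inv_pos.2 h), inv_mul_cancel₀ h.ne']

lemma nu_smul (em ep : H) (hne : em ≠ ep) :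
    ‖ep - em‖ • ((‖ep - em‖)⁻¹ • (ep - em)) = ep - em :=
  smul_inv_smul₀ (hl_pos em ep hne).ne' _

lemma nu_inner (em ep : H) (hne : em ≠ ep) :
    ⟪ep - em, (‖ep - em‖)⁻¹ • (ep - em)⟫ = ‖ep - em‖ := by
  have h := (hl_pos em ep hne).ne'
  rw [real_inner_smul_right, real_inner_self_eq_norm_mul_norm]
  field_simp

lemma sqrt2_mul_L (em ep : H) (hne : em ≠ ep) :
    Real.sqrt 2 * (‖ep - em‖ / Real.sqrt 2) = ‖ep - em‖ := by
  rw [mul_comm, div_mul_cancel₀ _ sqrt2_pos.ne']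

lemma U0_left (em ep : H) {t : ℝ} (ht : t ≤ 0) : U₀ em ep t = em := by
  simp [U₀, ht]

lemma U0_mid (em ep : H) {t : ℝ} (ht : 0 < t) (htL : t ≤ ‖ep - em‖ / Real.sqrt 2) :
    U₀ em ep t = em + (Real.sqrt 2 * t) • ((‖ep - em‖)⁻¹ • (ep - em)) := by
  simp [U₀, not_le.2 ht, htL]

lemma U0_right (em ep : H) (hne : em ≠ ep) {t : ℝ} (ht : ‖ep - em‖ / Real.sqrt 2 ≤ t) :
    U₀ em ep t = ep := by
  have h0 : ¬ t ≤ 0 := not_le.2 (lt_of_lt_of_le (L_pos em ep hne) ht)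
  by_cases htL : t ≤ ‖ep - em‖ / Real.sqrt 2
  · have heq : t = ‖ep - em‖ / Real.sqrt 2 := le_antisymm htL ht
    subst heq
    rw [U0_mid em ep (L_pos em ep hne) le_rfl, sqrt2_mul_L em ep hne, nu_smul em ep hne]
    abel
  · simp [U₀, h0, htL]

lemma U0'_eq (em ep : H) : U₀' em ep =
    (Set.Ioo (0:ℝ) (‖ep - em‖ / Real.sqrt 2)).indicator
      (fun _ => Real.sqrt 2 • ((‖ep - em‖)⁻¹ • (ep - em))) := by
  funext t
  by_cases h : 0 < t ∧ t < ‖ep - em‖ / Real.sqrt 2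
  · simp [U₀', h, Set.indicator_apply, Set.mem_Ioo]
  · simp [U₀', h, Set.indicator_apply, Set.mem_Ioo]

lemma U0'_integrable (em ep : H) : Integrable (U₀' em ep) volume := by
  rw [U0'_eq]
  refine (integrable_indicator_iff measurableSet_Ioo).2 (integrableOn_const ?_)
  rw [Real.volume_Ioo]; exact ENNReal.ofReal_ne_top

lemma U0_cont (em ep : H) (hne : em ≠ ep) : Continuous (U₀ em ep) := by
  have hL := L_pos em ep hne
  have : U₀ em ep = fun t =>
      em + (Real.sqrt 2 * min (max t 0) (‖ep - em‖ / Real.sqrt 2)) •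
        ((‖ep - em‖)⁻¹ • (ep - em)) := by
    funext t
    rcases le_or_gt t 0 with ht | ht
    · rw [U0_left em ep ht, max_eq_right ht, min_eq_left hL.le]
      simp
    · rcases le_or_gt t (‖ep - em‖ / Real.sqrt 2) with htL | htL
      · rw [U0_mid em ep ht htL, max_eq_left ht.le, min_eq_left htL]
      · rw [U0_right em ep hne htL.le, max_eq_left ht.le, min_eq_right htL.le,
          sqrt2_mul_L em ep hne, nu_smul em ep hne]
        abel
  rw [this]
  fun_prop

lemma U0_primitive [CompleteSpace H] (em ep : H) (hne : em ≠ ep) (x : ℝ) :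
    ∫ t in (0:ℝ)..x, U₀' em ep t = U₀ em ep x - em := by
  set L := ‖ep - em‖ / Real.sqrt 2 with hLdef
  have hLpos := L_pos em ep hne
  rcases le_or_gt x 0 with hx | hx
  · have hzero : Set.EqOn (U₀' em ep) (fun _ => (0:H)) (Set.uIcc (0:ℝ) x) := by
      intro τ hτ
      rw [Set.uIcc_of_ge hx] at hτ
      have : ¬ (0 < τ ∧ τ < L) := by rintro ⟨h1, _⟩; exact absurd hτ.2 (not_le.2 h1)
      simp only [U₀']; exact if_neg this
    rw [intervalIntegral.integral_congr hzero, intervalIntegral.integral_zero,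
      U0_left em ep hx, sub_self]
  · have hcont : ContinuousOn (U₀ em ep) (Set.Icc 0 x) := (U0_cont em ep hne).continuousOn
    have hderiv : ∀ τ ∈ Set.Ioo (0:ℝ) x,
        HasDerivWithinAt (U₀ em ep) (U₀' em ep τ) (Set.Ioi τ) τ := by
      intro τ hτ
      rcases lt_or_ge τ L with hτL | hτL
      · have hmem : Set.Ioo (0:ℝ) L ∈ nhds τ :=
          (isOpen_Ioo).mem_nhds ⟨hτ.1, hτL⟩
        have haff : HasDerivAt (fun t : ℝ =>
            em + (Real.sqrt 2 * t) • ((‖ep - em‖)⁻¹ • (ep - em)))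
            (Real.sqrt 2 • ((‖ep - em‖)⁻¹ • (ep - em))) τ := by
          have h1 : HasDerivAt (fun t : ℝ => Real.sqrt 2 * t) (Real.sqrt 2) τ := by
            simpa using (hasDerivAt_id τ).const_mul (Real.sqrt 2)
          simpa using (h1.smul_const ((‖ep - em‖)⁻¹ • (ep - em))).const_add em
        have heq : (fun t => U₀ em ep t) =ᶠ[nhds τ]
            (fun t : ℝ => em + (Real.sqrt 2 * t) • ((‖ep - em‖)⁻¹ • (ep - em))) := by
          filter_upwards [hmem] with y hy
          exact U0_mid em ep hy.1 hy.2.le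
        have : HasDerivAt (U₀ em ep) (Real.sqrt 2 • ((‖ep - em‖)⁻¹ • (ep - em))) τ :=
          haff.congr_of_eventuallyEq heq
        have hU0' : U₀' em ep τ = Real.sqrt 2 • ((‖ep - em‖)⁻¹ • (ep - em)) := by
          simp [U₀', hτ.1, show τ < ‖ep - em‖ / Real.sqrt 2 from hτL]
        rw [hU0']
        exact this.hasDerivWithinAt
      · have hU0' : U₀' em ep τ = 0 := by
          simp [U₀', not_lt.2 (show ‖ep - em‖ / Real.sqrt 2 ≤ τ from hτL)]
        rw [hU0']
        refine (hasDerivWithinAt_const τ (Set.Ioi τ) ep).congr ?_ ?_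
        · intro y hy
          exact U0_right em ep hne (hτL.trans (le_of_lt hy))
        · exact U0_right em ep hne hτL
    rw [intervalIntegral.integral_eq_sub_of_hasDeriv_right_of_le hx.le hcont hderiv
      (U0'_integrable em ep).intervalIntegrable, U0_left em ep le_rfl]

lemma part1 [CompleteSpace H] (em ep : H) (hne : em ≠ ep) :
    IsH1loc (U₀ em ep) (U₀' em ep) := by
  constructor
  · intro a b
    have hadd : (∫ t in a..(0:ℝ), U₀' em ep t) + ∫ t in (0:ℝ)..b, U₀' em ep t
        = ∫ t in a..b, U₀' em ep t :=
      intervalIntegral.integral_add_adjacent_intervals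
        (U0'_integrable em ep).intervalIntegrable (U0'_integrable em ep).intervalIntegrable
    rw [← hadd, intervalIntegral.integral_symm, U0_primitive em ep hne a,
      U0_primitive em ep hne b]
    abel
  · have heq : (fun t => ‖U₀' em ep t‖ ^ 2) =
        (Set.Ioo (0:ℝ) (‖ep - em‖ / Real.sqrt 2)).indicator (fun _ => (2:ℝ)) := by
      funext t
      rw [U0'_eq]
      by_cases h : t ∈ Set.Ioo (0:ℝ) (‖ep - em‖ / Real.sqrt 2)
      · rw [Set.indicator_of_mem h, Set.indicator_of_mem h, norm_smul]
        rw [nu_norm_one em ep hne, Real.norm_eq_abs, abs_of_pos sqrt2_pos, mul_one,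
          Real.sq_sqrt (by norm_num : (0:ℝ) ≤ 2)]
      · rw [Set.indicator_of_notMem h, Set.indicator_of_notMem h, norm_zero]
        norm_num
    rw [heq]
    refine Integrable.locallyIntegrable ?_
    refine (integrable_indicator_iff measurableSet_Ioo).2 (integrableOn_const ?_)
    rw [Real.volume_Ioo]; exact ENNReal.ofReal_ne_top

end Aux


section Aux2
variable {H : Type*} [NormedAddCommGroup H] [InnerProductSpace ℝ H]

lemma part2 (em ep : H) (hne : em ≠ ep) : memA em ep (U₀ em ep) := by
  have hl := hl_pos em ep hne
  refine ⟨-1, max (‖ep - em‖ / Real.sqrt 2) 1,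
    lt_of_lt_of_le (by norm_num : (-1:ℝ) < 1) (le_max_right _ _), ?_, ?_⟩
  · intro t ht
    rw [U0_left em ep (ht.trans (by norm_num))]
    simp only [sub_self, inner_zero_left]
    positivity
  · intro t ht
    rw [U0_right em ep hne ((le_max_left _ _).trans ht)]
    rw [nu_inner em ep hne]
    linarith

lemma chiW_of_mem {em ep v : H} (h : v ∈ ({em, ep} : Set H)) : chiW em ep v = 0 :=
  Set.indicator_of_notMem (Set.notMem_compl_iff.2 h) _

lemma chiW_of_not_mem {em ep v : H} (h : v ∉ ({em, ep} : Set H)) : chiW em ep v = 1 :=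
  Set.indicator_of_mem (Set.mem_compl h) _

lemma nu_ne_zero (em ep : H) (hne : em ≠ ep) : (‖ep - em‖)⁻¹ • (ep - em) ≠ 0 := by
  intro h
  have := nu_norm_one em ep hne
  rw [h, norm_zero] at this
  norm_num at this

lemma part4 (em ep : H) (hne : em ≠ ep) :
    actJ (chiW em ep) (U₀ em ep) (U₀' em ep)
      = ENNReal.ofReal (Real.sqrt 2 * ‖ep - em‖) := by
  have hl := hl_pos em ep hne
  set L := ‖ep - em‖ / Real.sqrt 2 with hLdef
  set ν := (‖ep - em‖)⁻¹ • (ep - em) with hνdef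
  have hF : (fun t => ENNReal.ofReal (‖U₀' em ep t‖ ^ 2 / 2) + chiW em ep (U₀ em ep t))
      = (Set.Ioo (0:ℝ) L).indicator (fun _ => (2:ℝ≥0∞)) := by
    funext t
    by_cases h : t ∈ Set.Ioo (0:ℝ) L
    · have h1 : U₀' em ep t = Real.sqrt 2 • ν := by simp [U₀', h.1, show t < ‖ep - em‖ / Real.sqrt 2 from h.2, hνdef]
      have h2 : U₀ em ep t = em + (Real.sqrt 2 * t) • ν := U0_mid em ep h.1 h.2.le
      have hnorm : ‖U₀' em ep t‖ ^ 2 / 2 = 1 := by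
        rw [h1, norm_smul, nu_norm_one em ep hne, Real.norm_eq_abs, abs_of_pos sqrt2_pos,
          mul_one, Real.sq_sqrt (by norm_num : (0:ℝ) ≤ 2)]
        norm_num
      have hmem : U₀ em ep t ∉ ({em, ep} : Set H) := by
        rw [h2]
        rintro (he | he)
        · rw [add_eq_left, smul_eq_zero] at he
          rcases he with he | he
          · have : t = 0 := by
              rcases mul_eq_zero.1 he with h' | h'
              · exact absurd h' sqrt2_pos.ne'
              · exact h'
            exact absurd this h.1.ne'
          · exact nu_ne_zero em ep hne he
        · rw [show ep = em + ‖ep - em‖ • ν by rw [nu_smul em ep hne]; abel] at he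
          have heq : (Real.sqrt 2 * t) • ν = ‖ep - em‖ • ν := add_left_cancel he
          rw [← sub_eq_zero, ← sub_smul, smul_eq_zero] at heq
          rcases heq with h' | h'
          · have h'' : Real.sqrt 2 * t = ‖ep - em‖ := by linarith [sub_eq_zero.1 h']
            have ht' : t = L := by
              rw [hLdef, eq_div_iff sqrt2_pos.ne']
              linarith [h'']
            exact absurd ht' h.2.ne
          · exact nu_ne_zero em ep hne h'
      rw [Set.indicator_of_mem h, hnorm, chiW_of_not_mem hmem]
      rw [ENNReal.ofReal_one, one_add_one_eq_two]
    · have h1 : U₀' em ep t = 0 := by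
        rw [U0'_eq, Set.indicator_of_notMem h]
      have hmem : U₀ em ep t ∈ ({em, ep} : Set H) := by
        rcases le_or_gt t 0 with ht | ht
        · left; exact U0_left em ep ht
        · have htL : L ≤ t := by
            by_contra hc
            exact h ⟨ht, not_le.1 hc⟩
          right; exact U0_right em ep hne htL
      rw [Set.indicator_of_notMem h, h1, chiW_of_mem hmem]
      simp
  rw [actJ, hF, lintegral_indicator measurableSet_Ioo, setLIntegral_const, Real.volume_Ioo,
    sub_zero]
  rw [show (2:ℝ≥0∞) = ENNReal.ofReal 2 by simp, ← ENNReal.ofReal_mul (by norm_num)]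
  congr 1
  rw [hLdef]
  have h2 : Real.sqrt 2 * Real.sqrt 2 = 2 := Real.mul_self_sqrt (by norm_num)
  field_simp
  nlinarith [h2]

lemma part3 [CompleteSpace H] (em ep : H) (hne : em ≠ ep) (V V' : ℝ → H)
    (hH1 : IsH1loc V V') (hmem : memA em ep V) :
    ENNReal.ofReal (Real.sqrt 2 * ‖ep - em‖) ≤ actJ (chiW em ep) V V' := by
  obtain ⟨hFTC, hsq⟩ := hH1
  obtain ⟨tm, tp, htmtp, hm, hp⟩ := hmem
  have hl := hl_pos em ep hne
  set ν := (‖ep - em‖)⁻¹ • (ep - em) with hν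
  by_cases htop : actJ (chiW em ep) V V' = ⊤
  · rw [htop]; exact le_top
  have hB : (∫⁻ t, chiW em ep (V t)) ≠ ⊤ := by
    intro h
    have hge : (⊤:ℝ≥0∞) ≤ ∫⁻ t, (ENNReal.ofReal (‖V' t‖ ^ 2 / 2) + chiW em ep (V t)) := by
      rw [← h]
      exact lintegral_mono fun t => self_le_add_left _ _
    exact htop (top_unique hge)
  -- find a point a ≤ tm where V = em
  have ha : ∃ a, a ≤ tm ∧ V a = em := by
    by_contra hcon
    push_neg at hcon
    have hone : ∀ t ∈ Set.Iic tm, (1:ℝ≥0∞) = chiW em ep (V t) := by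
      intro t ht
      rw [chiW_of_not_mem ?_]
      rintro (he | he)
      · exact hcon t ht he
      · have h1 := hm t ht
        rw [he, nu_inner em ep hne] at h1
        linarith
    apply hB
    refine top_unique ?_
    calc (⊤:ℝ≥0∞) = volume (Set.Iic tm) := Real.volume_Iic.symm
      _ = ∫⁻ _ in Set.Iic tm, 1 := (setLIntegral_one _).symm
      _ = ∫⁻ t in Set.Iic tm, chiW em ep (V t) :=
          setLIntegral_congr_fun measurableSet_Iic hone
      _ ≤ ∫⁻ t, chiW em ep (V t) := setLIntegral_le_lintegral _ _
  -- find a point b ≥ tp where V = ep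
  have hb : ∃ b, tp ≤ b ∧ V b = ep := by
    by_contra hcon
    push_neg at hcon
    have hone : ∀ t ∈ Set.Ici tp, (1:ℝ≥0∞) = chiW em ep (V t) := by
      intro t ht
      rw [chiW_of_not_mem ?_]
      rintro (he | he)
      · have h1 := hp t ht
        rw [he, sub_self, inner_zero_left] at h1
        linarith
      · exact hcon t ht he
    apply hB
    refine top_unique ?_
    calc (⊤:ℝ≥0∞) = volume (Set.Ici tp) := Real.volume_Ici.symm
      _ = ∫⁻ _ in Set.Ici tp, 1 := (setLIntegral_one _).symm
      _ = ∫⁻ t in Set.Ici tp, chiW em ep (V t) :=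
          setLIntegral_congr_fun measurableSet_Ici hone
      _ ≤ ∫⁻ t, chiW em ep (V t) := setLIntegral_le_lintegral _ _
  obtain ⟨a, hatm, hVa⟩ := ha
  obtain ⟨b, htpb, hVb⟩ := hb
  have hab : a < b := lt_of_le_of_lt hatm (lt_of_lt_of_le htmtp htpb)
  -- integrability of V' on (a, b]
  have hVint : IntegrableOn V' (Set.Ioc a b) volume := by
    by_cases hii : IntervalIntegrable V' volume a b
    · exact (intervalIntegrable_iff_integrableOn_Ioc_of_le hab.le).1 hii
    · exfalso
      have h3 := hFTC a b
      rw [intervalIntegral.integral_undef hii, hVa, hVb, sub_eq_zero] at h3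
      exact hne h3.symm
  set g : ℝ → H := (Set.Ioc a b).indicator V' with hg_def
  have hg : Integrable g volume := (integrable_indicator_iff measurableSet_Ioc).2 hVint
  have hgV' : ∀ t ∈ Set.Ioc a b, g t = V' t := fun t ht => Set.indicator_of_mem ht _
  have hcong : ∀ s ∈ Set.Icc a b, ∀ u ∈ Set.Icc a b, (∫ τ in s..u, g τ) = V u - V s := by
    intro s hs u hu
    have h1 : (∫ τ in s..u, g τ) = ∫ τ in s..u, V' τ := by
      apply intervalIntegral.integral_congr_ae
      apply ae_of_all
      intro x hx
      have hx' : a < x ∧ x ≤ b := by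
        rw [Set.mem_uIoc] at hx
        rcases hx with ⟨h1', h2'⟩ | ⟨h1', h2'⟩
        · exact ⟨lt_of_le_of_lt hs.1 h1', h2'.trans hu.2⟩
        · exact ⟨lt_of_le_of_lt hu.1 h1', h2'.trans hs.2⟩
      show (Set.Ioc a b).indicator V' x = V' x
      exact Set.indicator_of_mem (Set.mem_Ioc.mpr hx') _
    rw [h1, ← hFTC s u]
  set P : ℝ → H := fun x => ∫ τ in a..x, g τ with hP_def
  have hPcont : Continuous P :=
    intervalIntegral.continuous_primitive (fun s u => hg.intervalIntegrable) a
  have haIcc : a ∈ Set.Icc a b := ⟨le_refl a, hab.le⟩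
  have hlevel : ∀ c : H, ∀ᵐ t, t ∈ Set.Icc a b ∩ P ⁻¹' {c - V a} → g t = 0 := by
    intro c
    apply ae_zero_on_level hg
      (measurableSet_Icc.inter ((isClosed_singleton.preimage hPcont).measurableSet))
    rintro s ⟨hs, hPs⟩ u ⟨hu, hPu⟩
    have hPs' : P s = c - V a := hPs
    have hPu' : P u = c - V a := hPu
    have hsplit : (P s + ∫ τ in s..u, g τ) = P u :=
      intervalIntegral.integral_add_adjacent_intervals
        hg.intervalIntegrable hg.intervalIntegrable
    have h4 : (∫ τ in s..u, g τ) = P u - P s := by rw [← hsplit]; abel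
    rw [h4, hPs', hPu', sub_self]
  have hmemA : ∀ t ∈ Set.Ioc a b, ∀ c : H, V t = c →
      t ∈ Set.Icc a b ∩ P ⁻¹' {c - V a} := by
    intro t ht c hc
    have htIcc : t ∈ Set.Icc a b := ⟨ht.1.le, ht.2⟩
    refine ⟨htIcc, ?_⟩
    rw [Set.mem_preimage, Set.mem_singleton_iff]
    show (∫ τ in a..t, g τ) = c - V a
    rw [hcong a haIcc t htIcc, hc]
  set φ : ℝ → ℝ := fun t => Real.sqrt 2 * ⟪ν, V' t⟫ with hφ
  have hae : ∀ᵐ t ∂(volume.restrict (Set.Ioc a b)),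
      ENNReal.ofReal (φ t) ≤ ENNReal.ofReal (‖V' t‖ ^ 2 / 2) + chiW em ep (V t) := by
    filter_upwards [ae_restrict_of_ae (hlevel em), ae_restrict_of_ae (hlevel ep),
      ae_restrict_mem measurableSet_Ioc] with t h1 h2 ht
    by_cases hVt : V t ∈ ({em, ep} : Set H)
    · have hV'0 : V' t = 0 := by
        rw [← hgV' t ht]
        rcases hVt with he | he
        · exact h1 (hmemA t ht em he)
        · exact h2 (hmemA t ht ep he)
      simp only [hφ, hV'0, inner_zero_right, mul_zero, ENNReal.ofReal_zero]
      exact bot_le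
    · rw [chiW_of_not_mem hVt]
      have hinner : ⟪ν, V' t⟫ ≤ ‖V' t‖ := by
        calc ⟪ν, V' t⟫ ≤ ‖ν‖ * ‖V' t‖ := real_inner_le_norm _ _
          _ = ‖V' t‖ := by rw [nu_norm_one em ep hne, one_mul]
      have hle : φ t ≤ ‖V' t‖ ^ 2 / 2 + 1 := by
        simp only [hφ]
        nlinarith [Real.sq_sqrt (show (0:ℝ) ≤ 2 by norm_num), Real.sqrt_nonneg 2,
          sq_nonneg (‖V' t‖ - Real.sqrt 2), norm_nonneg (V' t), hinner]
      calc ENNReal.ofReal (φ t) ≤ ENNReal.ofReal (‖V' t‖ ^ 2 / 2 + 1) :=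
            ENNReal.ofReal_le_ofReal hle
        _ = ENNReal.ofReal (‖V' t‖ ^ 2 / 2) + 1 := by
            rw [ENNReal.ofReal_add (by positivity) zero_le_one, ENNReal.ofReal_one]
  have hφint : Integrable φ (volume.restrict (Set.Ioc a b)) := by
    have h5 := (innerSL ℝ ν).integrable_comp hVint
    have h6 := h5.const_mul (Real.sqrt 2)
    simpa [hφ] using h6
  have hφval : ∫ t in Set.Ioc a b, φ t = Real.sqrt 2 * ‖ep - em‖ := by
    simp only [hφ]
    rw [integral_const_mul]
    congr 1
    have h7 : ∫ t in Set.Ioc a b, ⟪ν, V' t⟫ = ⟪ν, ∫ t in Set.Ioc a b, V' t⟫ := by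
      have := (innerSL ℝ ν).integral_comp_comm hVint
      simpa using this
    rw [h7]
    have h8 : ∫ t in Set.Ioc a b, V' t = ep - em := by
      have h9 := hFTC a b
      rw [intervalIntegral.integral_of_le hab.le] at h9
      rw [← h9, hVa, hVb]
    rw [h8, real_inner_comm, nu_inner em ep hne]
  have hφpos : Integrable (fun t => max (φ t) 0) (volume.restrict (Set.Ioc a b)) :=
    hφint.pos_part
  have hmono : ∫ t in Set.Ioc a b, φ t ≤ ∫ t in Set.Ioc a b, max (φ t) 0 :=
    integral_mono hφint hφpos fun t => le_max_left _ _
  have heqofReal : ENNReal.ofReal (∫ t in Set.Ioc a b, max (φ t) 0)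
      = ∫⁻ t in Set.Ioc a b, ENNReal.ofReal (max (φ t) 0) :=
    ofReal_integral_eq_lintegral_ofReal hφpos (ae_of_all _ fun t => le_max_right _ _)
  have hmax : ∀ t : ℝ, ENNReal.ofReal (max (φ t) 0) = ENNReal.ofReal (φ t) := by
    intro t
    rcases le_total 0 (φ t) with h | h
    · rw [max_eq_left h]
    · rw [max_eq_right h, ENNReal.ofReal_zero]
      exact (ENNReal.ofReal_eq_zero.2 h).symm
  calc ENNReal.ofReal (Real.sqrt 2 * ‖ep - em‖)
      = ENNReal.ofReal (∫ t in Set.Ioc a b, φ t) := by rw [hφval]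
    _ ≤ ENNReal.ofReal (∫ t in Set.Ioc a b, max (φ t) 0) := ENNReal.ofReal_le_ofReal hmono
    _ = ∫⁻ t in Set.Ioc a b, ENNReal.ofReal (max (φ t) 0) := heqofReal
    _ = ∫⁻ t in Set.Ioc a b, ENNReal.ofReal (φ t) := by simp_rw [hmax]
    _ ≤ ∫⁻ t in Set.Ioc a b, (ENNReal.ofReal (‖V' t‖ ^ 2 / 2) + chiW em ep (V t)) :=
        lintegral_mono_ae hae
    _ ≤ ∫⁻ t, (ENNReal.ofReal (‖V' t‖ ^ 2 / 2) + chiW em ep (V t)) :=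
        setLIntegral_le_lintegral _ _
    _ = actJ (chiW em ep) V V' := rfl

end Aux2

/-- For `𝒲` the characteristic function of `ℋ ∖ {e⁻, e⁺}`, the explicit map `U₀`
belongs to `𝒜`, minimizes `𝒥_ℝ` over `𝒜`, and the minimal value is `√2 ℓ₀`. -/
theorem stmt_2 {H : Type*} [NormedAddCommGroup H] [InnerProductSpace ℝ H]
    [CompleteSpace H]
    (em ep : H) (hne : em ≠ ep) :
    IsH1loc (U₀ em ep) (U₀' em ep) ∧ memA em ep (U₀ em ep) ∧
      (∀ V V', IsH1loc V V' → memA em ep V →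
        actJ (chiW em ep) (U₀ em ep) (U₀' em ep) ≤ actJ (chiW em ep) V V') ∧
      actJ (chiW em ep) (U₀ em ep) (U₀' em ep)
        = ENNReal.ofReal (Real.sqrt 2 * ‖ep - em‖) := by
  refine ⟨part1 em ep hne, part2 em ep hne, fun V V' hH1 hmem => ?_, part4 em ep hne⟩
  rw [part4 em ep hne]
  exact part3 em ep hne V V' hH1 hmem
end

section
/- Let ℋ be a Hilbert space and let 𝒲 : ℋ → [0,+∞] be weakly sequentially lower semicontinuous, with exactly two zeros e⁻ and e⁺, and with liminf_{‖v‖→∞} 𝒲(v) > 0. Fix 𝒥₀ ∈ (0,∞) and set 𝒜_b = {V ∈ 𝒜 : 𝒥_ℝ(V) ≤ 𝒥₀}. Then there exist constants M, M′ > 0 (depending only on 𝒲 and 𝒥₀) such that every V ∈ 𝒜_b satisfies: (i) sup_{t∈ℝ} ‖V(t)‖ ≤ M; (ii) ‖V(t₂) − V(t₁)‖ ≤ M′ |t₂ − t₁|^{1/2} for all t₁, t₂ ∈ ℝ; and (iii) V(t) converges weakly to e⁺ as t → +∞ and weakly to e⁻ as t → −∞. -/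
open MeasureTheory Filter
open scoped ENNReal RealInnerProductSpace

section Aux

variable {H : Type*} [NormedAddCommGroup H] [InnerProductSpace ℝ H] [CompleteSpace H]

lemma infPos (W : H → ℝ≥0∞) (em ep : H)
    (weakBW : ∀ (v : ℕ → H) (C : ℝ), (∀ k, ‖v k‖ ≤ C) →
      ∃ (w : H) (φ : ℕ → ℕ), StrictMono φ ∧
        ∀ f : H, Tendsto (fun k => ⟪f, v (φ k)⟫) atTop (nhds ⟪f, w⟫))
    (hlsc : ∀ (v : ℕ → H) (w : H),
      (∀ f : H, Tendsto (fun k => ⟪f, v k⟫) atTop (nhds ⟪f, w⟫)) →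
      W w ≤ liminf (fun k => W (v k)) atTop)
    (hzeros : ∀ v, W v = 0 ↔ v = em ∨ v = ep)
    (M δ : ℝ) (f : H) (c : ℝ) (Q : H → Prop)
    (hQ : ∀ (v : ℕ → H) (w : H),
      (∀ g : H, Tendsto (fun k => ⟪g, v k⟫) atTop (nhds ⟪g, w⟫)) → (∀ k, Q (v k)) → Q w)
    (hexcl : ∀ z, (z = em ∨ z = ep) → Q z → ¬ (δ ≤ |⟪f, z⟫ - c|)) :
    ∃ μ₀ : ℝ≥0∞, 0 < μ₀ ∧ ∀ u : H, ‖u‖ ≤ M → δ ≤ |⟪f, u⟫ - c| → Q u → μ₀ ≤ W u := by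
  by_contra hcon
  push_neg at hcon
  have hsel : ∀ k : ℕ, ∃ u : H, ‖u‖ ≤ M ∧ δ ≤ |⟪f, u⟫ - c| ∧ Q u ∧ W u < (k : ℝ≥0∞)⁻¹ := by
    intro k
    obtain ⟨u, h1, h2, h3, h4⟩ := hcon ((k : ℝ≥0∞)⁻¹)
      (ENNReal.inv_pos.2 (ENNReal.natCast_ne_top k))
    exact ⟨u, h1, h2, h3, h4⟩
  choose u hu1 hu2 hu3 hu4 using hsel
  have htend : Tendsto (fun k => W (u k)) atTop (nhds 0) := by
    have h0 : Tendsto (fun k : ℕ => (k : ℝ≥0∞)⁻¹) atTop (nhds 0) :=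
      ENNReal.tendsto_inv_nat_nhds_zero
    exact tendsto_of_tendsto_of_tendsto_of_le_of_le tendsto_const_nhds h0
      (fun k => zero_le) (fun k => (hu4 k).le)
  obtain ⟨w, φ, hφ, hwk⟩ := weakBW u M hu1
  have hWw : W w = 0 := by
    have h1 := hlsc (u ∘ φ) w (fun g => hwk g)
    have h2 : Tendsto (fun k => W (u (φ k))) atTop (nhds 0) :=
      htend.comp (hφ.tendsto_atTop)
    have h2' : Tendsto (fun k => W ((u ∘ φ) k)) atTop (nhds 0) := h2
    rw [h2'.liminf_eq] at h1
    exact le_antisymm h1 zero_le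
  have hzw := (hzeros w).1 hWw
  refine hexcl w hzw (hQ (u ∘ φ) w hwk (fun k => hu3 (φ k))) ?_
  have habs : Tendsto (fun k => |⟪f, u (φ k)⟫ - c|) atTop (nhds |⟪f, w⟫ - c|) :=
    ((hwk f).sub_const c).abs
  exact ge_of_tendsto habs (Eventually.of_forall fun k => hu2 (φ k))

end Aux

lemma weakBW' {H : Type*} [NormedAddCommGroup H] [InnerProductSpace ℝ H] [CompleteSpace H]
    (v : ℕ → H) (C : ℝ) (hv : ∀ k, ‖v k‖ ≤ C) :
    ∃ (w : H) (φ : ℕ → ℕ), StrictMono φ ∧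
      ∀ f : H, Tendsto (fun k => ⟪f, v (φ k)⟫) atTop (nhds ⟪f, w⟫) := by
  have hC0 : 0 ≤ C := (norm_nonneg (v 0)).trans (hv 0)
  have hbd : ∀ f : H, ∀ k, |⟪f, v k⟫| ≤ ‖f‖ * C := fun f k =>
    (abs_real_inner_le_norm f (v k)).trans
      (mul_le_mul_of_nonneg_left (hv k) (norm_nonneg f))
  set F : ℕ → ℕ → ℝ := fun k j => ⟪v j, v k⟫ with hF
  have hFmem : ∀ k, F k ∈ Set.pi Set.univ (fun j : ℕ => Set.Icc (-(‖v j‖ * C)) (‖v j‖ * C)) := by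
    intro k j _
    exact abs_le.1 (hbd (v j) k)
  obtain ⟨g, -, φ, hφ, hconv⟩ :=
    (isCompact_univ_pi (fun j => isCompact_Icc)).tendsto_subseq hFmem
  have hconv' : ∀ j, Tendsto (fun k => ⟪v j, v (φ k)⟫) atTop (nhds (g j)) := by
    intro j
    exact (tendsto_pi_nhds.1 hconv) j
  set D : Set H := {f | ∃ L : ℝ, Tendsto (fun k => ⟪f, v (φ k)⟫) atTop (nhds L)} with hD
  have hzero : (0:H) ∈ D := ⟨0, by simpa using tendsto_const_nhds⟩
  have hadd : ∀ f f', f ∈ D → f' ∈ D → f + f' ∈ D := by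
    rintro f f' ⟨L, hL⟩ ⟨L', hL'⟩
    exact ⟨L + L', by simpa [inner_add_left] using hL.add hL'⟩
  have hsmul : ∀ (c : ℝ) f, f ∈ D → c • f ∈ D := by
    rintro c f ⟨L, hL⟩
    exact ⟨c * L, by simpa [real_inner_smul_left] using hL.const_mul c⟩
  have hclosed : IsClosed D := by
    rw [← isSeqClosed_iff_isClosed]
    intro fs f hfs hf
    have hcauchy : CauchySeq (fun k => ⟪f, v (φ k)⟫) := by
      rw [Metric.cauchySeq_iff]
      intro η hη
      have h3 : 0 < η / 3 := by linarith
      have htend : Tendsto (fun n => ‖fs n - f‖ * C) atTop (nhds 0) := by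
        have := (tendsto_iff_norm_sub_tendsto_zero.1 hf).mul_const C
        simpa using this
      obtain ⟨n, hn⟩ := (htend.eventually (gt_mem_nhds h3)).exists
      obtain ⟨L, hL⟩ := hfs n
      obtain ⟨N, hN⟩ := (Metric.cauchySeq_iff.1 hL.cauchySeq) (η/3) h3
      refine ⟨N, fun a ha b hb => ?_⟩
      have hab : ∀ k, |⟪f, v (φ k)⟫ - ⟪fs n, v (φ k)⟫| ≤ ‖fs n - f‖ * C := by
        intro k
        have heq : ⟪f, v (φ k)⟫ - ⟪fs n, v (φ k)⟫ = ⟪f - fs n, v (φ k)⟫ := by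
          rw [inner_sub_left]
        rw [heq]
        have := hbd (f - fs n) (φ k)
        simpa [norm_sub_rev f (fs n)] using this
      have hd := hN a ha b hb
      rw [Real.dist_eq] at hd ⊢
      have h1 := hab a
      have h2 := hab b
      set xa := ⟪f, v (φ a)⟫; set xb := ⟪f, v (φ b)⟫
      set ya := ⟪fs n, v (φ a)⟫; set yb := ⟪fs n, v (φ b)⟫
      calc |xa - xb| = |(xa - ya) + (ya - yb) + (yb - xb)| := by ring_nf
        _ ≤ |xa - ya| + |ya - yb| + |yb - xb| := by
            exact (abs_add_le _ _).trans (by gcongr; exact abs_add_le _ _)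
        _ < η := by
            rw [abs_sub_comm yb xb] at *
            linarith [abs_sub_comm ya yb ▸ hd]
    obtain ⟨L, hL⟩ := cauchySeq_tendsto_of_complete hcauchy
    exact ⟨L, hL⟩
  have hall : ∀ f : H, f ∈ D := by
    intro f
    set K : Submodule ℝ H := Submodule.span ℝ (Set.range v) with hK
    have hKD : (K : Set H) ⊆ D := by
      intro x hx
      refine Submodule.span_induction ?_ hzero (fun a b _ _ ha hb => hadd a b ha hb)
        (fun c a _ ha => hsmul c a ha) hx
      rintro x ⟨j, rfl⟩; exact ⟨g j, hconv' j⟩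
    set Kc : Submodule ℝ H := K.topologicalClosure with hKc
    have hKcD : (Kc : Set H) ⊆ D := by
      rw [hKc, Submodule.topologicalClosure_coe]
      exact hclosed.closure_subset_iff.2 hKD
    haveI : CompleteSpace Kc := K.isClosed_topologicalClosure.completeSpace_coe
    obtain ⟨y, hy, z, hz, rfl⟩ := Kc.exists_add_mem_mem_orthogonal f
    refine hadd y z (hKcD hy) ⟨0, ?_⟩
    have hz0 : ∀ k, ⟪z, v (φ k)⟫ = 0 := by
      intro k
      have hvK : v (φ k) ∈ Kc :=
        K.le_topologicalClosure (Submodule.subset_span ⟨φ k, rfl⟩)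
      have := (Submodule.mem_orthogonal Kc z).1 hz _ hvK
      rwa [real_inner_comm] at this
    simpa [hz0] using (tendsto_const_nhds : Tendsto (fun _ : ℕ => (0:ℝ)) atTop (nhds 0))
  choose L hL using hall
  have hLadd : ∀ f f' : H, L (f + f') = L f + L f' := by
    intro f f'
    refine tendsto_nhds_unique (hL (f + f')) ?_
    simpa [inner_add_left] using (hL f).add (hL f')
  have hLsmul : ∀ (c : ℝ) (f : H), L (c • f) = c * L f := by
    intro c f
    refine tendsto_nhds_unique (hL (c • f)) ?_
    simpa [real_inner_smul_left] using (hL f).const_mul c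
  have hLbd : ∀ f : H, ‖L f‖ ≤ C * ‖f‖ := by
    intro f
    have hb : ∀ k, |⟪f, v (φ k)⟫| ≤ C * ‖f‖ := fun k => by
      rw [mul_comm]; exact hbd f (φ k)
    have habs : Tendsto (fun k => |⟪f, v (φ k)⟫|) atTop (nhds |L f|) := (hL f).abs
    exact le_of_tendsto habs (Eventually.of_forall hb)
  set ℒ : H →L[ℝ] ℝ := LinearMap.mkContinuous
    { toFun := L, map_add' := hLadd, map_smul' := hLsmul } C hLbd with hℒ
  refine ⟨(InnerProductSpace.toDual ℝ H).symm ℒ, φ, hφ, fun f => ?_⟩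
  have hrw : ⟪f, (InnerProductSpace.toDual ℝ H).symm ℒ⟫ = L f := by
    rw [real_inner_comm, InnerProductSpace.toDual_symm_apply]
    rfl
  rw [hrw]; exact hL f

lemma intervalAccum (F : ℝ → ℝ≥0∞) (μ₀ : ℝ≥0∞) (hμ : μ₀ ≠ 0) (r : ℝ) (hr : 0 < r)
    (I : ℕ → ℝ)
    (hdisj : ∀ j k, j < k → Disjoint (Set.Icc (I j) (I j + r)) (Set.Icc (I k) (I k + r)))
    (hF : ∀ k, ∀ t ∈ Set.Icc (I k) (I k + r), μ₀ ≤ F t)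
    (C : ℝ≥0∞) (hC : C ≠ ⊤) (hle : ∫⁻ t, F t ≤ C) : False := by
  have key : ∀ n : ℕ, (n : ℝ≥0∞) * (μ₀ * ENNReal.ofReal r) ≤ C := by
    intro n
    set U : Set ℝ := ⋃ k ∈ Finset.range n, Set.Icc (I k) (I k + r) with hU
    have hUm : MeasurableSet U :=
      (Finset.range n).measurableSet_biUnion fun k _ => measurableSet_Icc
    have hvol : volume U = (n : ℝ≥0∞) * ENNReal.ofReal r := by
      rw [hU, measure_biUnion_finset ?_ (fun k _ => measurableSet_Icc)]
      · simp [Real.volume_Icc]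
      · intro j hj k hk hjk
        rcases lt_or_gt_of_ne hjk with h | h
        · exact hdisj j k h
        · exact (hdisj k j h).symm
    have hpt : ∀ t, U.indicator (fun _ => μ₀) t ≤ F t := by
      intro t
      by_cases ht : t ∈ U
      · rw [Set.indicator_of_mem ht]
        obtain ⟨k, -, htk⟩ := Set.mem_iUnion₂.1 ht
        exact hF k t htk
      · simp [Set.indicator_of_notMem ht]
    calc (n : ℝ≥0∞) * (μ₀ * ENNReal.ofReal r)
        = μ₀ * volume U := by rw [hvol]; ring
      _ = ∫⁻ t, U.indicator (fun _ => μ₀) t :=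
          (lintegral_indicator_const hUm μ₀).symm
      _ ≤ ∫⁻ t, F t := lintegral_mono hpt
      _ ≤ C := hle
  have hx : μ₀ * ENNReal.ofReal r ≠ 0 := by
    simp [hμ, ENNReal.ofReal_eq_zero, not_le, hr]
  by_cases htop : μ₀ * ENNReal.ofReal r = ⊤
  · have := key 1
    rw [htop] at this
    simp at this
    exact hC (top_le_iff.1 (by simpa using this))
  · obtain ⟨n, hn⟩ := ENNReal.exists_nat_gt (ENNReal.div_lt_top hC hx).ne
    have := key n
    rw [← ENNReal.le_div_iff_mul_le (Or.inl hx) (Or.inl htop)] at this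
    exact absurd this (not_le.2 hn)

lemma freqAccum (F : ℝ → ℝ≥0∞) (μ₀ : ℝ≥0∞) (hμ : μ₀ ≠ 0) (r : ℝ) (hr : 0 < r)
    (hstep : ∀ N : ℝ, ∃ a, N ≤ a ∧ ∀ t ∈ Set.Icc a (a + r), μ₀ ≤ F t)
    (C : ℝ≥0∞) (hC : C ≠ ⊤) (hle : ∫⁻ t, F t ≤ C) : False := by
  choose A hA1 hA2 using hstep
  set I : ℕ → ℝ := fun n => Nat.rec (A 0) (fun _ prev => A (prev + r + 1)) n with hI
  have hIs : ∀ k, I k + r + 1 ≤ I (k + 1) := fun k => hA1 (I k + r + 1)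
  have hmono : ∀ j k, j < k → I j + r < I k := by
    intro j k hjk
    induction k with
    | zero => omega
    | succ k ih =>
      rcases Nat.lt_succ_iff_lt_or_eq.1 hjk with h | h
      · have h1 := ih h
        have h2 := hIs k
        linarith
      · subst h
        have := hIs j
        linarith
  refine intervalAccum F μ₀ hμ r hr I (fun j k hjk => ?_) (fun k => ?_) C hC hle
  · rw [Set.disjoint_left]
    intro t ht1 ht2
    have := hmono j k hjk
    simp only [Set.mem_Icc] at *
    linarith
  · cases k with
    | zero => exact hA2 0
    | succ k => exact hA2 (I k + r + 1)

lemma freqAccum' (F : ℝ → ℝ≥0∞) (μ₀ : ℝ≥0∞) (hμ : μ₀ ≠ 0) (r : ℝ) (hr : 0 < r)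
    (hstep : ∀ N : ℝ, ∃ a, a + r ≤ N ∧ ∀ t ∈ Set.Icc a (a + r), μ₀ ≤ F t)
    (C : ℝ≥0∞) (hC : C ≠ ⊤) (hle : ∫⁻ t, F t ≤ C) : False := by
  choose A hA1 hA2 using hstep
  set I : ℕ → ℝ := fun n => Nat.rec (A 0) (fun _ prev => A (prev - 1)) n with hI
  have hIs : ∀ k, I (k + 1) + r ≤ I k - 1 := fun k => hA1 (I k - 1)
  have hmono : ∀ j k, j < k → I k + r < I j := by
    intro j k hjk
    induction k with
    | zero => omega
    | succ k ih =>
      rcases Nat.lt_succ_iff_lt_or_eq.1 hjk with h | h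
      · have h1 := ih h
        have h2 := hIs k
        linarith
      · subst h
        have := hIs j
        linarith
  refine intervalAccum F μ₀ hμ r hr I (fun j k hjk => ?_) (fun k => ?_) C hC hle
  · rw [Set.disjoint_left]
    intro t ht1 ht2
    have := hmono j k hjk
    simp only [Set.mem_Icc] at *
    linarith
  · cases k with
    | zero => exact hA2 0
    | succ k => exact hA2 (I k - 1)

lemma holderBound {H : Type*} [NormedAddCommGroup H] [InnerProductSpace ℝ H]
    (V V' : ℝ → H) (h1 : ∀ a b : ℝ, V b - V a = ∫ t in a..b, V' t)
    (J₀ : ℝ) (hJ₀ : 0 ≤ J₀)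
    (hkin : (∫⁻ t, ENNReal.ofReal (‖V' t‖ ^ 2 / 2)) ≤ ENNReal.ofReal J₀) :
    ∀ t₁ t₂ : ℝ, ‖V t₂ - V t₁‖ ≤ Real.sqrt (2 * J₀) * Real.sqrt |t₂ - t₁| := by
  have key : ∀ t₁ t₂ : ℝ, t₁ ≤ t₂ →
      ‖V t₂ - V t₁‖ ≤ Real.sqrt (2 * J₀) * Real.sqrt |t₂ - t₁| := by
    intro t₁ t₂ ht
    rw [h1 t₁ t₂, intervalIntegral.integral_of_le ht]
    set μ := volume.restrict (Set.Ioc t₁ t₂) with hμ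
    by_cases hm : AEStronglyMeasurable V' μ
    · refine (norm_integral_le_lintegral_norm V').trans ?_
      have hfm : AEMeasurable (fun t => ENNReal.ofReal ‖V' t‖) μ :=
        hm.norm.aemeasurable.ennreal_ofReal
      have hcs := ENNReal.lintegral_mul_le_Lp_mul_Lq μ
        (Real.HolderConjugate.two_two : (2:ℝ).HolderConjugate 2) hfm
        (aemeasurable_const (b := (1:ℝ≥0∞)))
      have hpow : ∀ x : ℝ≥0∞, x ^ (2:ℝ) = x ^ (2:ℕ) := fun x => by
        rw [← ENNReal.rpow_natCast]; norm_num
      simp only [Pi.mul_apply, mul_one, ENNReal.one_rpow, hpow, one_pow] at hcs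
      have hone : (∫⁻ _, (1:ℝ≥0∞) ∂μ) = ENNReal.ofReal (t₂ - t₁) := by
        rw [lintegral_one, hμ, Measure.restrict_apply_univ, Real.volume_Ioc]
      rw [hone] at hcs
      have hsq : (∫⁻ t, (ENNReal.ofReal ‖V' t‖) ^ (2:ℕ) ∂μ) ≤ ENNReal.ofReal (2 * J₀) := by
        have heq : ∀ t : ℝ, (ENNReal.ofReal ‖V' t‖) ^ (2:ℕ)
            = ENNReal.ofReal 2 * ENNReal.ofReal (‖V' t‖ ^ 2 / 2) := by
          intro t
          rw [← ENNReal.ofReal_pow (norm_nonneg _), ← ENNReal.ofReal_mul (by norm_num)]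
          congr 1
          ring
        simp only [heq]
        rw [lintegral_const_mul' _ _ ENNReal.ofReal_ne_top]
        calc ENNReal.ofReal 2 * ∫⁻ t, ENNReal.ofReal (‖V' t‖ ^ 2 / 2) ∂μ
            ≤ ENNReal.ofReal 2 * ∫⁻ t, ENNReal.ofReal (‖V' t‖ ^ 2 / 2) := by
              gcongr
              exact Measure.restrict_le_self
          _ ≤ ENNReal.ofReal 2 * ENNReal.ofReal J₀ := by gcongr
          _ = ENNReal.ofReal (2 * J₀) := (ENNReal.ofReal_mul (by norm_num)).symm
      have hfin : (∫⁻ t, ENNReal.ofReal ‖V' t‖ ∂μ)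
          ≤ ENNReal.ofReal (Real.sqrt (2 * J₀) * Real.sqrt (t₂ - t₁)) := by
        refine hcs.trans ?_
        rw [ENNReal.ofReal_mul (Real.sqrt_nonneg _)]
        gcongr
        · calc (∫⁻ a, ENNReal.ofReal ‖V' a‖ ^ (2:ℕ) ∂μ) ^ (1/2 : ℝ)
              ≤ (ENNReal.ofReal (2 * J₀)) ^ (1/2 : ℝ) := ENNReal.rpow_le_rpow hsq (by norm_num)
            _ = ENNReal.ofReal ((2 * J₀) ^ (1/2 : ℝ)) :=
                ENNReal.ofReal_rpow_of_nonneg (by linarith) (by norm_num)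
            _ = ENNReal.ofReal (Real.sqrt (2 * J₀)) := by rw [Real.sqrt_eq_rpow]
        · calc (ENNReal.ofReal (t₂ - t₁)) ^ (1/2 : ℝ)
              = ENNReal.ofReal ((t₂ - t₁) ^ (1/2 : ℝ)) :=
                ENNReal.ofReal_rpow_of_nonneg (by linarith) (by norm_num)
            _ = ENNReal.ofReal (Real.sqrt (t₂ - t₁)) := by rw [Real.sqrt_eq_rpow]
            _ ≤ ENNReal.ofReal (Real.sqrt (t₂ - t₁)) := le_rfl
      calc (∫⁻ t, ENNReal.ofReal ‖V' t‖ ∂μ).toReal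
          ≤ (ENNReal.ofReal (Real.sqrt (2 * J₀) * Real.sqrt (t₂ - t₁))).toReal :=
            ENNReal.toReal_mono ENNReal.ofReal_ne_top hfin
        _ = Real.sqrt (2 * J₀) * Real.sqrt (t₂ - t₁) := by
            rw [ENNReal.toReal_ofReal (by positivity)]
        _ = Real.sqrt (2 * J₀) * Real.sqrt |t₂ - t₁| := by
            rw [abs_of_nonneg (by linarith)]
    · rw [integral_non_aestronglyMeasurable hm, norm_zero]
      positivity
  intro t₁ t₂
  rcases le_total t₁ t₂ with h | h
  · exact key t₁ t₂ h
  · rw [norm_sub_rev, abs_sub_comm]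
    exact key t₂ t₁ h
/-- Finite-energy orbits in `𝒜_b` are uniformly bounded, uniformly `½`-Hölder
equicontinuous, and converge weakly to `e^±` at `±∞`. -/
theorem stmt_3 {H : Type*} [NormedAddCommGroup H] [InnerProductSpace ℝ H]
    [CompleteSpace H]
    (W : H → ℝ≥0∞) (em ep : H)
    -- `𝒲` is weakly sequentially lower semicontinuous
    (hlsc : ∀ (v : ℕ → H) (w : H),
      (∀ f : H, Tendsto (fun k => ⟪f, v k⟫) atTop (nhds ⟪f, w⟫)) →
      W w ≤ liminf (fun k => W (v k)) atTop)
    -- `𝒲` has exactly two zeros `e⁻` and `e⁺`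
    (hne : em ≠ ep)
    (hzeros : ∀ v, W v = 0 ↔ v = em ∨ v = ep)
    -- `liminf_{‖v‖→∞} 𝒲(v) > 0`
    (hcoer : ∃ ε : ℝ≥0∞, 0 < ε ∧ ∃ R : ℝ, ∀ v : H, R ≤ ‖v‖ → ε ≤ W v)
    (J₀ : ℝ) (hJ₀ : 0 < J₀) :
    ∃ M M' : ℝ, 0 < M ∧ 0 < M' ∧
      ∀ V V', IsH1loc V V' → memA em ep V → actJ W V V' ≤ ENNReal.ofReal J₀ →
        (∀ t : ℝ, ‖V t‖ ≤ M) ∧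
        (∀ t₁ t₂ : ℝ, ‖V t₂ - V t₁‖ ≤ M' * Real.sqrt |t₂ - t₁|) ∧
        (∀ f : H, Tendsto (fun t => ⟪f, V t⟫) atTop (nhds ⟪f, ep⟫)) ∧
        (∀ f : H, Tendsto (fun t => ⟪f, V t⟫) atBot (nhds ⟪f, em⟫)) := by
  obtain ⟨ε, hε, R, hR⟩ := hcoer
  set M' := Real.sqrt (2 * J₀) with hM'def
  have hM' : 0 < M' := Real.sqrt_pos.2 (by linarith)
  set T := (ENNReal.ofReal J₀ / ε).toReal with hTdef
  have hT0 : 0 ≤ T := ENNReal.toReal_nonneg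
  set M := |R| + M' * Real.sqrt (T + 1) + 1 with hMdef
  have hM : 0 < M := by positivity
  -- basic facts about `em, ep`
  have hl0 : 0 < ‖ep - em‖ := by
    rw [norm_pos_iff, sub_ne_zero]
    exact hne.symm
  set nv : H := (‖ep - em‖)⁻¹ • (ep - em) with hnv
  refine ⟨M, M', hM, hM', fun V V' hH1 hmem hact => ?_⟩
  have hW : (∫⁻ t, W (V t)) ≤ ENNReal.ofReal J₀ :=
    le_trans (lintegral_mono fun t => le_add_self) hact
  have hkin : (∫⁻ t, ENNReal.ofReal (‖V' t‖ ^ 2 / 2)) ≤ ENNReal.ofReal J₀ :=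
    le_trans (lintegral_mono fun t => le_self_add) hact
  have hHol := holderBound V V' hH1.1 J₀ hJ₀.le hkin
  -- (i) uniform bound
  have hnear : ∀ t : ℝ, ∃ s, |t - s| ≤ T + 1 ∧ ‖V s‖ < R := by
    intro t
    by_contra hno
    push_neg at hno
    have hlow : ∀ s, (Set.Icc t (t + (T+1))).indicator (fun _ => ε) s ≤ W (V s) := by
      intro s
      by_cases hs : s ∈ Set.Icc t (t + (T+1))
      · rw [Set.indicator_of_mem hs]
        refine hR _ (hno s (abs_le.2 ⟨by linarith [hs.2], by linarith [hs.1]⟩))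
      · simp [Set.indicator_of_notMem hs]
    have hint : ε * ENNReal.ofReal (T+1) ≤ ENNReal.ofReal J₀ := by
      calc ε * ENNReal.ofReal (T+1)
          = ε * volume (Set.Icc t (t + (T+1))) := by
            rw [Real.volume_Icc]
            congr 2
            ring
        _ = ∫⁻ s, (Set.Icc t (t + (T+1))).indicator (fun _ => ε) s :=
            (lintegral_indicator_const measurableSet_Icc ε).symm
        _ ≤ ∫⁻ s, W (V s) := lintegral_mono hlow
        _ ≤ ENNReal.ofReal J₀ := hW
    rcases eq_or_ne ε ⊤ with htop | htop
    · rw [htop, ENNReal.top_mul (by simp [ENNReal.ofReal_eq_zero]; linarith)] at hint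
      exact (by simpa using hint : (⊤ : ℝ≥0∞) ≤ ENNReal.ofReal J₀).not_gt
        (ENNReal.ofReal_lt_top)
    · have hd : ENNReal.ofReal J₀ / ε ≠ ⊤ :=
        (ENNReal.div_lt_top ENNReal.ofReal_ne_top hε.ne').ne
      have hTof : ENNReal.ofReal (T + 1) = ENNReal.ofReal J₀ / ε + 1 := by
        rw [ENNReal.ofReal_add hT0 zero_le_one, ENNReal.ofReal_one, hTdef,
          ENNReal.ofReal_toReal hd]
      rw [hTof, mul_add, mul_one, ENNReal.mul_div_cancel hε.ne' htop] at hint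
      exact (ENNReal.lt_add_right ENNReal.ofReal_ne_top hε.ne').not_ge hint
  have hbd : ∀ t : ℝ, ‖V t‖ ≤ M := by
    intro t
    obtain ⟨s, hs1, hs2⟩ := hnear t
    have heq : V t = V s + (V t - V s) := by abel
    calc ‖V t‖ = ‖V s + (V t - V s)‖ := by rw [← heq]
      _ ≤ ‖V s‖ + ‖V t - V s‖ := norm_add_le _ _
      _ ≤ M := by
          have h2 := hHol s t
          have h3 : Real.sqrt |t - s| ≤ Real.sqrt (T+1) := Real.sqrt_le_sqrt hs1
          have h4 := mul_le_mul_of_nonneg_left h3 hM'.le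
          have h5 : R ≤ |R| := le_abs_self R
          rw [hMdef]
          linarith
  refine ⟨hbd, fun t₁ t₂ => hHol t₁ t₂, ?_, ?_⟩
  · -- weak convergence at +∞
    obtain ⟨tm, tp, htmp, hcm, hcp⟩ := hmem
    intro f
    by_cases hf0 : f = 0
    · subst hf0
      simp only [inner_zero_left]
      exact tendsto_const_nhds
    rw [Metric.tendsto_nhds]
    by_contra hcon
    push_neg at hcon
    obtain ⟨δ, hδ, hfreq⟩ := hcon
    have hfr := frequently_atTop.1 hfreq
    set c := ⟪f, ep⟫ with hc
    have hfn : 0 < ‖f‖ := norm_pos_iff.2 hf0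
    set r := (δ / (2 * (‖f‖ * M')))^2 with hrdef
    have hr : 0 < r := by positivity
    have hsqr : ‖f‖ * M' * Real.sqrt r = δ / 2 := by
      rw [hrdef, Real.sqrt_sq (by positivity)]
      field_simp
    -- the positive infimum
    have hQw : ∀ (u : ℕ → H) (w : H),
        (∀ g : H, Tendsto (fun k => ⟪g, u k⟫) atTop (nhds ⟪g, w⟫)) →
        (∀ k, ‖ep - em‖ / 4 ≤ ⟪u k - em, nv⟫) → ‖ep - em‖ / 4 ≤ ⟪w - em, nv⟫ := by
      intro u w hconv hk
      have h2 : Tendsto (fun k => ⟪u k - em, nv⟫) atTop (nhds ⟪w - em, nv⟫) := by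
        simp only [inner_sub_left]
        have := (hconv nv).sub_const ⟪em, nv⟫
        simpa [real_inner_comm] using this
      exact ge_of_tendsto h2 (Eventually.of_forall hk)
    have hexcl : ∀ z, (z = em ∨ z = ep) → (‖ep - em‖ / 4 ≤ ⟪z - em, nv⟫) →
        ¬ (δ/2 ≤ |⟪f, z⟫ - c|) := by
      rintro z (rfl | rfl) hQz habs
      · have hz0 : ⟪z - z, nv⟫ = (0:ℝ) := by simp
        rw [hz0] at hQz
        linarith
      · rw [hc, sub_self, abs_zero] at habs
        linarith
    obtain ⟨μ₀, hμ₀, hmin⟩ := infPos W em ep (fun v C hv => weakBW' v C hv) hlsc hzeros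
      M (δ/2) f c (fun u => ‖ep - em‖ / 4 ≤ ⟪u - em, nv⟫) hQw hexcl
    -- accumulate energy
    refine freqAccum (fun t => W (V t)) μ₀ hμ₀.ne' r hr ?_ (ENNReal.ofReal J₀)
        ENNReal.ofReal_ne_top hW
    intro N
    obtain ⟨s, hsN, hsd⟩ := hfr (max N tp)
    rw [Real.dist_eq] at hsd
    refine ⟨s, le_trans (le_max_left _ _) hsN, fun t ht => ?_⟩
    have htp : tp ≤ t := le_trans (le_trans (le_max_right N tp) hsN) ht.1
    refine hmin (V t) (hbd t) ?_ (hcp t htp)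
    have h1 : |⟪f, V t⟫ - ⟪f, V s⟫| ≤ δ/2 := by
      have he : ⟪f, V t⟫ - ⟪f, V s⟫ = ⟪f, V t - V s⟫ := (inner_sub_right f _ _).symm
      rw [he]
      calc |⟪f, V t - V s⟫| ≤ ‖f‖ * ‖V t - V s‖ := abs_real_inner_le_norm _ _
        _ ≤ ‖f‖ * (M' * Real.sqrt |t - s|) := by
            have := hHol s t
            gcongr
        _ ≤ ‖f‖ * (M' * Real.sqrt r) := by
            have hts : |t - s| ≤ r := by
              rw [abs_of_nonneg (by linarith [ht.1])]
              linarith [ht.2]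
            gcongr
        _ = δ/2 := by rw [← hsqr]; ring
    have h3 : |⟪f, V s⟫ - c| ≤ |⟪f, V s⟫ - ⟪f, V t⟫| + |⟪f, V t⟫ - c| := abs_sub_le _ _ _
    rw [abs_sub_comm] at h1
    linarith
  · -- weak convergence at -∞
    obtain ⟨tm, tp, htmp, hcm, hcp⟩ := hmem
    intro f
    by_cases hf0 : f = 0
    · subst hf0
      simp only [inner_zero_left]
      exact tendsto_const_nhds
    rw [Metric.tendsto_nhds]
    by_contra hcon
    push_neg at hcon
    obtain ⟨δ, hδ, hfreq⟩ := hcon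
    have hfr := frequently_atBot.1 hfreq
    set c := ⟪f, em⟫ with hc
    have hfn : 0 < ‖f‖ := norm_pos_iff.2 hf0
    set r := (δ / (2 * (‖f‖ * M')))^2 with hrdef
    have hr : 0 < r := by positivity
    have hsqr : ‖f‖ * M' * Real.sqrt r = δ / 2 := by
      rw [hrdef, Real.sqrt_sq (by positivity)]
      field_simp
    have hQw : ∀ (u : ℕ → H) (w : H),
        (∀ g : H, Tendsto (fun k => ⟪g, u k⟫) atTop (nhds ⟪g, w⟫)) →
        (∀ k, ⟪u k - em, nv⟫ ≤ 3 * ‖ep - em‖ / 4) → ⟪w - em, nv⟫ ≤ 3 * ‖ep - em‖ / 4 := by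
      intro u w hconv hk
      have h2 : Tendsto (fun k => ⟪u k - em, nv⟫) atTop (nhds ⟪w - em, nv⟫) := by
        simp only [inner_sub_left]
        have := (hconv nv).sub_const ⟪em, nv⟫
        simpa [real_inner_comm] using this
      exact le_of_tendsto h2 (Eventually.of_forall hk)
    have hexcl : ∀ z, (z = em ∨ z = ep) → (⟪z - em, nv⟫ ≤ 3 * ‖ep - em‖ / 4) →
        ¬ (δ/2 ≤ |⟪f, z⟫ - c|) := by
      rintro z (rfl | rfl) hQz habs
      · rw [hc, sub_self, abs_zero] at habs
        linarith
      · have hz : ⟪z - em, nv⟫ = ‖z - em‖ := by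
          rw [hnv, real_inner_smul_right, real_inner_self_eq_norm_sq]
          field_simp
        rw [hz] at hQz
        linarith
    obtain ⟨μ₀, hμ₀, hmin⟩ := infPos W em ep (fun v C hv => weakBW' v C hv) hlsc hzeros
      M (δ/2) f c (fun u => ⟪u - em, nv⟫ ≤ 3 * ‖ep - em‖ / 4) hQw hexcl
    refine freqAccum' (fun t => W (V t)) μ₀ hμ₀.ne' r hr ?_ (ENNReal.ofReal J₀)
        ENNReal.ofReal_ne_top hW
    intro N
    obtain ⟨s, hsN, hsd⟩ := hfr (min N tm)
    rw [Real.dist_eq] at hsd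
    refine ⟨s - r, by linarith [le_trans hsN (min_le_left N tm)], fun t ht => ?_⟩
    have htm : t ≤ tm := by
      have h4 := ht.2
      have h5 := le_trans hsN (min_le_right N tm)
      linarith
    refine hmin (V t) (hbd t) ?_ (hcm t htm)
    have h1 : |⟪f, V t⟫ - ⟪f, V s⟫| ≤ δ/2 := by
      have he : ⟪f, V t⟫ - ⟪f, V s⟫ = ⟪f, V t - V s⟫ := (inner_sub_right f _ _).symm
      rw [he]
      calc |⟪f, V t - V s⟫| ≤ ‖f‖ * ‖V t - V s‖ := abs_real_inner_le_norm _ _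
        _ ≤ ‖f‖ * (M' * Real.sqrt |t - s|) := by
            have := hHol s t
            gcongr
        _ ≤ ‖f‖ * (M' * Real.sqrt r) := by
            have hts : |t - s| ≤ r := by
              rw [abs_of_nonpos (by linarith [ht.2])]
              linarith [ht.1]
            gcongr
        _ = δ/2 := by rw [← hsqr]; ring
    have h3 : |⟪f, V s⟫ - c| ≤ |⟪f, V s⟫ - ⟪f, V t⟫| + |⟪f, V t⟫ - c| := abs_sub_le _ _ _
    rw [abs_sub_comm] at h1
    linarith
end

section
/- Let N ≥ 1 be an integer and for each k ∈ ℕ let x₀(k) < x₁(k) < ⋯ < x_{2N}(k) be points of the extended real line [−∞,+∞], with x_j(k) ∈ ℝ for 1 ≤ j ≤ 2N−1, such that lim_{k→∞}(x₁(k) − x₀(k)) = +∞ and lim_{k→∞}(x_{2N}(k) − x_{2N−1}(k)) = +∞. Then there exist integers i₀, j₀ with 1 ≤ i₀ ≤ j₀ ≤ N and a subsequence along which: (a) the sequence x_{2j₀−1}(k) − x_{2i₀−1}(k) is bounded; (b) x_{2i₀−1}(k) − x_{2i₀−2}(k) → +∞; and (c) x_{2j₀}(k) − x_{2j₀−1}(k)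 → +∞. -/
/-!
Pass to a subsequence along which every interior gap `x_{m+1} − x_m` either stays bounded
above or tends to `+∞`. The gap after `x₀` and the gap before `x_{2N}` tend to `+∞`, so there
is a gap after an even point `x_{2a}` and a gap after an odd point `x_{2b+1}`, `a ≤ b`, that tend
to `+∞` with no such gap strictly between them. The gaps between `x_{2a+1}` and `x_{2b+1}` are
then all bounded above, and so is their telescoping sum `x_{2b+1} − x_{2a+1}`.
-/

open Filter Set Topology

theorem exists_strictMono_forall_mem_of_exists_strictMono {α ι : Type*}
    {P : (ℕ → α) → Prop} (hP : ∀ u φ, StrictMono φ → P u → P (u ∘ φ))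
    (hex : ∀ u, ∃ φ : ℕ → ℕ, StrictMono φ ∧ P (u ∘ φ)) (s : Finset ι) (u : ι → ℕ → α) :
    ∃ φ : ℕ → ℕ, StrictMono φ ∧ ∀ i ∈ s, P (u i ∘ φ) := by
  classical
  induction s using Finset.induction_on with
  | empty => exact ⟨id, strictMono_id, by simp⟩
  | insert i s _ ih =>
    obtain ⟨φ, hφ, hs⟩ := ih
    obtain ⟨ψ, hψ, hi⟩ := hex (u i ∘ φ)
    refine ⟨φ ∘ ψ, hφ.comp hψ, Finset.forall_mem_insert .. |>.2 ⟨hi, fun j hj => ?_⟩⟩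
    exact hP _ ψ hψ (hs j hj)

theorem exists_strictMono_tendsto_atTop_of_not_bddAbove {v : ℕ → ℝ}
    (hv : ¬BddAbove (range v)) : ∃ φ : ℕ → ℕ, StrictMono φ ∧ Tendsto (v ∘ φ) atTop atTop := by
  have hfreq : ∀ n : ℕ, ∃ᶠ k in atTop, (n : ℝ) < v k := by
    intro n
    by_contra h
    exact hv (isBoundedUnder_of_eventually_le (a := (n : ℝ))
      (by simpa [not_frequently] using h)).bddAbove_range
  obtain ⟨φ, hφ, hlt⟩ := extraction_forall_of_frequently hfreq
  exact ⟨φ, hφ, tendsto_atTop_mono (fun n => (hlt n).le) tendsto_natCast_atTop_atTop⟩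

theorem exists_strictMono_bddAbove_or_tendsto_atTop (v : ℕ → ℝ) :
    ∃ φ : ℕ → ℕ, StrictMono φ ∧ (BddAbove (range (v ∘ φ)) ∨ Tendsto (v ∘ φ) atTop atTop) := by
  by_cases hv : BddAbove (range v)
  · exact ⟨id, strictMono_id, Or.inl hv⟩
  · obtain ⟨φ, hφ, hv⟩ := exists_strictMono_tendsto_atTop_of_not_bddAbove hv
    exact ⟨φ, hφ, Or.inr hv⟩

theorem exists_strictMono_forall_mem_bddAbove_or_tendsto_atTop {ι : Type*} (s : Finset ι)
    (u : ι → ℕ → ℝ) : ∃ φ : ℕ → ℕ, StrictMono φ ∧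
      ∀ i ∈ s, BddAbove (range (u i ∘ φ)) ∨ Tendsto (u i ∘ φ) atTop atTop := by
  refine exists_strictMono_forall_mem_of_exists_strictMono
    (P := fun v => BddAbove (range v) ∨ Tendsto v atTop atTop) ?_
    exists_strictMono_bddAbove_or_tendsto_atTop s u
  rintro v φ hφ (hv | hv)
  · exact Or.inl (hv.range_comp_right φ)
  · exact Or.inr (hv.comp hφ.tendsto_atTop)

theorem bddAbove_range_sub_of_forall_bddAbove_range_succ_sub {ι : Type*} {f : ℕ → ι → ℝ}
    {p q : ℕ} (hpq : p ≤ q)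
    (h : ∀ m, p ≤ m → m < q → BddAbove (range fun k => f (m + 1) k - f m k)) :
    BddAbove (range fun k => f q k - f p k) := by
  induction q, hpq using Nat.le_induction with
  | base => exact ⟨0, forall_mem_range.2 fun k => by simp⟩
  | succ q hpq ih =>
    obtain ⟨C₁, hC₁⟩ := ih fun m hpm hmq => h m hpm (by omega)
    obtain ⟨C₂, hC₂⟩ := h q hpq (by omega)
    refine ⟨C₂ + C₁, forall_mem_range.2 fun k => ?_⟩
    have h₁ := hC₁ (mem_range_self k)
    have h₂ := hC₂ (mem_range_self k)
    linarith

theorem exists_consecutive_even_odd {T : ℕ → Prop} {n : ℕ} (h₀ : T 0) (hn : T (2 * n + 1)) :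
    ∃ a b, a ≤ b ∧ b ≤ n ∧ T (2 * a) ∧ T (2 * b + 1) ∧
      ∀ m, 2 * a < m → m < 2 * b + 1 → ¬T m := by
  classical
  have hodd : ∃ b, T (2 * b + 1) := ⟨n, hn⟩
  set b := Nat.find hodd
  set a := Nat.findGreatest (fun a => T (2 * a)) b
  refine ⟨a, b, Nat.findGreatest_le b, Nat.find_min' hodd hn,
    Nat.findGreatest_spec (P := fun a => T (2 * a)) (Nat.zero_le b) h₀, Nat.find_spec hodd,
    fun m ham hmb hm => ?_⟩
  obtain ⟨c, rfl | rfl⟩ := Nat.even_or_odd' m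
  · exact Nat.findGreatest_is_greatest (P := fun a => T (2 * a)) (n := b) (by omega) (by omega) hm
  · exact Nat.find_min hodd (by omega) hm

theorem stmt_5_general (N : ℕ) (hN : 1 ≤ N) (x : ℕ → ℕ → EReal)
    (hreal : ∀ k : ℕ, ∀ j : ℕ, 1 ≤ j → j ≤ 2 * N - 1 → ∃ r : ℝ, x k j = (r : EReal))
    (hfirst : Tendsto (fun k => x k 1 - x k 0) atTop (nhds ⊤))
    (hlast : Tendsto (fun k => x k (2 * N) - x k (2 * N - 1)) atTop (nhds ⊤)) :
    ∃ i₀ j₀ : ℕ, 1 ≤ i₀ ∧ i₀ ≤ j₀ ∧ j₀ ≤ N ∧ ∃ φ : ℕ → ℕ, StrictMono φ ∧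
      -- (a) the sequence `x_{2j₀−1} − x_{2i₀−1}` is bounded
      (∃ C : ℝ, ∀ k : ℕ,
        x (φ k) (2 * j₀ - 1) - x (φ k) (2 * i₀ - 1) ≤ (C : EReal)) ∧
      -- (b) `x_{2i₀−1} − x_{2i₀−2} → +∞`
      Tendsto (fun k => x (φ k) (2 * i₀ - 1) - x (φ k) (2 * i₀ - 2)) atTop (nhds ⊤) ∧
      -- (c) `x_{2j₀} − x_{2j₀−1} → +∞`
      Tendsto (fun k => x (φ k) (2 * j₀) - x (φ k) (2 * j₀ - 1)) atTop (nhds ⊤) := by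
  obtain ⟨n, rfl⟩ : ∃ n, N = n + 1 := ⟨N - 1, by omega⟩
  set y : ℕ → ℕ → ℝ := fun j k => (x k j).toReal
  have hy : ∀ j, 1 ≤ j → j ≤ 2 * n + 1 → ∀ k, (y j k : EReal) = x k j := by
    intro j hj₁ hj₂ k
    obtain ⟨r, hr⟩ := hreal k j hj₁ (by omega)
    simp [y, hr]
  have hgap : ∀ m, 1 ≤ m → m ≤ 2 * n → ∀ k,
      ((y (m + 1) k - y m k : ℝ) : EReal) = x k (m + 1) - x k m := fun m hm₁ hm₂ k => by
    rw [EReal.coe_sub, hy m hm₁ (by omega), hy (m + 1) (by omega) (by omega)]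
  obtain ⟨φ, hφ, hdich⟩ := exists_strictMono_forall_mem_bddAbove_or_tendsto_atTop
    (Finset.Icc 1 (2 * n)) fun m k => y (m + 1) k - y m k
  set T : ℕ → Prop := fun m => Tendsto (fun k => x (φ k) (m + 1) - x (φ k) m) atTop (𝓝 ⊤)
  have hT₀ : T 0 := hfirst.comp hφ.tendsto_atTop
  have hT₁ : T (2 * n + 1) := by
    simpa [T, Function.comp_def, show 2 * (n + 1) - 1 = 2 * n + 1 by omega, mul_add, add_assoc]
      using hlast.comp hφ.tendsto_atTop
  obtain ⟨a, b, hab, hbn, hTa, hTb, hbetween⟩ := exists_consecutive_even_odd hT₀ hT₁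
  obtain ⟨C, hC⟩ : BddAbove (range fun k => y (2 * b + 1) (φ k) - y (2 * a + 1) (φ k)) := by
    refine bddAbove_range_sub_of_forall_bddAbove_range_succ_sub (f := fun j k => y j (φ k))
      (by omega) fun m ham hmb => ?_
    refine (hdich m (Finset.mem_Icc.2 ⟨by omega, by omega⟩)).resolve_right fun hm => ?_
    refine hbetween m (by omega) hmb ?_
    exact (EReal.tendsto_coe_nhds_top_iff.2 hm).congr fun k => hgap m (by omega) (by omega) _
  refine ⟨a + 1, b + 1, by omega, by omega, by omega, φ, hφ, ⟨C, fun k => ?_⟩, ?_, ?_⟩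
  · rw [show 2 * (b + 1) - 1 = 2 * b + 1 by omega, show 2 * (a + 1) - 1 = 2 * a + 1 by omega,
      ← hy _ (by omega) (by omega), ← hy _ (by omega) (by omega), ← EReal.coe_sub]
    exact EReal.coe_le_coe_iff.2 (hC (mem_range_self k))
  · simpa [show 2 * (a + 1) - 1 = 2 * a + 1 by omega, show 2 * (a + 1) - 2 = 2 * a by omega]
      using hTa
  · simpa [show 2 * (b + 1) - 1 = 2 * b + 1 by omega, mul_add, add_assoc] using hTb

/-- Combinatorial selection lemma: given `2N+1` ordered sequences in the extended real
line (the interior ones being real) whose first and last gaps tend to `+∞`, after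
passing to a subsequence one can find indices `1 ≤ i₀ ≤ j₀ ≤ N` such that
`x_{2j₀−1} − x_{2i₀−1}` stays bounded while the gaps `x_{2i₀−1} − x_{2i₀−2}` and
`x_{2j₀} − x_{2j₀−1}` tend to `+∞`. -/
theorem stmt_5 (N : ℕ) (hN : 1 ≤ N) (x : ℕ → ℕ → EReal)
    (hmono : ∀ k : ℕ, ∀ j < 2 * N, x k j < x k (j + 1))
    (hreal : ∀ k : ℕ, ∀ j : ℕ, 1 ≤ j → j ≤ 2 * N - 1 → ∃ r : ℝ, x k j = (r : EReal))
    (hfirst : Tendsto (fun k => x k 1 - x k 0) atTop (nhds ⊤))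
    (hlast : Tendsto (fun k => x k (2 * N) - x k (2 * N - 1)) atTop (nhds ⊤)) :
    ∃ i₀ j₀ : ℕ, 1 ≤ i₀ ∧ i₀ ≤ j₀ ∧ j₀ ≤ N ∧ ∃ φ : ℕ → ℕ, StrictMono φ ∧
      -- (a) the sequence `x_{2j₀−1} − x_{2i₀−1}` is bounded
      (∃ C : ℝ, ∀ k : ℕ,
        x (φ k) (2 * j₀ - 1) - x (φ k) (2 * i₀ - 1) ≤ (C : EReal)) ∧
      -- (b) `x_{2i₀−1} − x_{2i₀−2} → +∞`
      Tendsto (fun k => x (φ k) (2 * i₀ - 1) - x (φ k) (2 * i₀ - 2)) atTop (nhds ⊤) ∧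
      -- (c) `x_{2j₀} − x_{2j₀−1} → +∞`
      Tendsto (fun k => x (φ k) (2 * j₀) - x (φ k) (2 * j₀ - 1)) atTop (nhds ⊤) :=
  stmt_5_general N hN x hreal hfirst hlast
end

section
/- Let ψ : ℝ → [0,∞) be Lipschitz continuous with Lipschitz constant β > 0, and let θ₀ > 0, γ > 0 and t₀ ∈ ℝ be such that ∫_{−∞}^{t} ψ(s) ds ≤ θ₀ e^{γ(t−t₀)} for all t ≤ t₀. Then ψ(t) ≤ 2√(β θ₀) e^{(γ/2)(t−t₀)} for all t ≤ t₀. -/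
/-!
If `ψ` is nonnegative and `β`-Lipschitz, then on `[t - ψ t / β, t]` it stays above the line
of slope `β` through `(t, ψ t)`, a triangle of area `ψ t ^ 2 / (2 β)`. Hence
`ψ t ^ 2 ≤ 2 β ∫_{-∞}^t ψ ≤ 2 β θ₀ e^{γ (t - t₀)}`, and taking square roots gives the bound.
-/

open MeasureTheory Set

theorem intervalIntegral_sub_mul_sub (c β t : ℝ) (hβ : 0 < β) :
    ∫ s in (t - c / β)..t, (c - β * (t - s)) = c ^ 2 / (2 * β) := by
  rw [intervalIntegral.integral_comp_sub_left (fun u => c - β * u), sub_self, sub_sub_cancel,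
    intervalIntegral.integral_sub intervalIntegrable_const
      ((continuous_const_mul β).intervalIntegrable _ _), intervalIntegral.integral_const_mul]
  simp only [intervalIntegral.integral_const, integral_id, smul_eq_mul]
  field_simp
  ring

theorem sq_div_le_setIntegral_Iic_of_lipschitz_left {ψ : ℝ → ℝ} {β t : ℝ} (hβ : 0 < β)
    (hψ0 : ∀ s ≤ t, 0 ≤ ψ s) (hlip : ∀ s ≤ t, ψ t - ψ s ≤ β * (t - s))
    (hint : IntegrableOn ψ (Iic t)) :
    ψ t ^ 2 / (2 * β) ≤ ∫ s in Iic t, ψ s := by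
  set a := t - ψ t / β
  have hat : a ≤ t := sub_le_self _ (div_nonneg (hψ0 t le_rfl) hβ.le)
  calc ψ t ^ 2 / (2 * β) = ∫ s in a..t, (ψ t - β * (t - s)) :=
        (intervalIntegral_sub_mul_sub _ _ _ hβ).symm
    _ = ∫ s in Icc a t, (ψ t - β * (t - s)) := by
        rw [intervalIntegral.integral_of_le hat, integral_Icc_eq_integral_Ioc]
    _ ≤ ∫ s in Icc a t, ψ s :=
        setIntegral_mono_on (by fun_prop : Continuous _).integrableOn_Icc
          (hint.mono_set Icc_subset_Iic_self) measurableSet_Icc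
          fun s hs => by linarith [hlip s hs.2]
    _ ≤ ∫ s in Iic t, ψ s :=
        setIntegral_mono_set hint ((ae_restrict_mem measurableSet_Iic).mono hψ0)
          Icc_subset_Iic_self.eventuallyLE

theorem stmt_19_general (ψ : ℝ → ℝ) (β θ₀ γ t₀ : ℝ)
    (hψ0 : ∀ t, 0 ≤ ψ t)
    (hβ : 0 < β)
    (hlip : ∀ s t : ℝ, |ψ t - ψ s| ≤ β * |t - s|)
    (hint : ∀ t : ℝ, t ≤ t₀ → IntegrableOn ψ (Set.Iic t) volume)
    (hbound : ∀ t : ℝ, t ≤ t₀ →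
      (∫ s in Set.Iic t, ψ s) ≤ θ₀ * Real.exp (γ * (t - t₀))) :
    ∀ t : ℝ, t ≤ t₀ →
      ψ t ≤ 2 * Real.sqrt (β * θ₀) * Real.exp (γ / 2 * (t - t₀)) := by
  intro t ht
  set E := Real.exp (γ / 2 * (t - t₀))
  have hlip_left : ∀ s ≤ t, ψ t - ψ s ≤ β * (t - s) := fun s hs =>
    (le_abs_self _).trans ((hlip s t).trans_eq (by rw [abs_of_nonneg (sub_nonneg.2 hs)]))
  have hE_sq : E ^ 2 = Real.exp (γ * (t - t₀)) := by
    rw [← Real.exp_nat_mul]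
    ring_nf
  have hsq : ψ t ^ 2 ≤ 2 * (β * θ₀) * E ^ 2 := by
    have h := (sq_div_le_setIntegral_Iic_of_lipschitz_left hβ (fun s _ => hψ0 s) hlip_left
      (hint t ht)).trans (hbound t ht)
    rw [div_le_iff₀ (by positivity), ← hE_sq] at h
    linarith
  calc ψ t ≤ Real.sqrt (2 * (β * θ₀) * E ^ 2) := Real.le_sqrt_of_sq_le hsq
    _ = Real.sqrt 2 * Real.sqrt (β * θ₀) * E := by
        rw [Real.sqrt_mul' _ (sq_nonneg E), Real.sqrt_sq (Real.exp_pos _).le,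
          Real.sqrt_mul zero_le_two]
    _ ≤ 2 * Real.sqrt (β * θ₀) * E := by
        gcongr
        rw [Real.sqrt_le_left zero_le_two]
        norm_num

/-- A nonnegative Lipschitz function whose primitive on half-lines decays exponentially
must itself decay exponentially (with half the rate):
if `∫_{−∞}^t ψ ≤ θ₀ e^{γ(t−t₀)}` for all `t ≤ t₀`, then
`ψ(t) ≤ 2√(βθ₀) e^{(γ/2)(t−t₀)}` for all `t ≤ t₀`. -/
theorem stmt_19 (ψ : ℝ → ℝ) (β θ₀ γ t₀ : ℝ)
    (hψ0 : ∀ t, 0 ≤ ψ t)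
    (hβ : 0 < β)
    (hlip : ∀ s t : ℝ, |ψ t - ψ s| ≤ β * |t - s|)
    (hθ₀ : 0 < θ₀) (hγ : 0 < γ)
    (hint : ∀ t : ℝ, t ≤ t₀ → IntegrableOn ψ (Set.Iic t) volume)
    (hbound : ∀ t : ℝ, t ≤ t₀ →
      (∫ s in Set.Iic t, ψ s) ≤ θ₀ * Real.exp (γ * (t - t₀))) :
    ∀ t : ℝ, t ≤ t₀ →
      ψ t ≤ 2 * Real.sqrt (β * θ₀) * Real.exp (γ / 2 * (t - t₀)) :=
  stmt_19_general ψ β θ₀ γ t₀ hψ0 hβ hlip hint hbound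
end
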